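/- arXiv:2409.03068 — 4 statements merged into one kernel-verified Lean document; each statement's English description precedes it below -/
import Mathlib

section
/- Let m ≥ 1. If there exists n ≥ 0 with m ≤ 2ⁿ such that P(T_n, m×m) = P(T_{n+1}, m×m), then P(T_n, m×m) = P(T_{n+k}, m×m) for every integer k ≥ 1; in particular P(T_n, m×m) = P(T, m×m). -/
/-- The 16-letter alphabet 𝒜 = {A,…,P}. -/
inductive A16 : Type
  | A | B | C | D | E | F | G | H | I | J | K | L | M | N | O | P
  deriving DecidableEq

/-- The 2×2 block substitution μ on 𝒜 (rows top to bottom). -/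
def mu : A16 → Fin 2 → Fin 2 → A16
  | .A => ![![.A, .F], ![.G, .C]]
  | .B => ![![.A, .F], ![.H, .D]]
  | .C => ![![.B, .E], ![.G, .C]]
  | .D => ![![.B, .E], ![.H, .D]]
  | .E => ![![.A, .N], ![.G, .K]]
  | .F => ![![.A, .N], ![.H, .L]]
  | .G => ![![.B, .M], ![.G, .K]]
  | .H => ![![.B, .M], ![.H, .L]]
  | .I => ![![.I, .F], ![.O, .C]]
  | .J => ![![.I, .F], ![.P, .D]]
  | .K => ![![.J, .E], ![.O, .C]]
  | .L => ![![.J, .E], ![.P, .D]]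
  | .M => ![![.I, .N], ![.O, .K]]
  | .N => ![![.I, .N], ![.P, .L]]
  | .O => ![![.J, .M], ![.O, .K]]
  | .P => ![![.J, .M], ![.P, .L]]

/-- Entry version of μ, indexed by arbitrary naturals (via mod 2). -/
def muE (x : A16) (r c : ℕ) : A16 :=
  mu x ⟨r % 2, by omega⟩ ⟨c % 2, by omega⟩

/-- `superE n x` is the supertile μⁿ(x), a 2ⁿ×2ⁿ array over 𝒜,
given as a total function on ℕ × ℕ (only indices < 2ⁿ are relevant). -/
def superE : ℕ → A16 → ℕ → ℕ → A16
  | 0, x, _, _ => x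
  | n + 1, x, r, c => muE (superE n x (r / 2) (c / 2)) r c

/-- The supertile T_k = μᵏ(N). -/
def Tfun (k : ℕ) : ℕ → ℕ → A16 := superE k .N

/-- An m×n pattern over the alphabet α. -/
abbrev Pat (α : Type) (m n : ℕ) := Fin m → Fin n → α

/-- The set of m×n patterns occurring in the size×size array X. -/
def patIn {α : Type} (X : ℕ → ℕ → α) (size m n : ℕ) : Set (Pat α m n) :=
  { p | ∃ r c : ℕ, r + m ≤ size ∧ c + n ≤ size ∧
      ∀ (i : Fin m) (j : Fin n), p i j = X (r + i) (c + j) }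

/-- P(T, m×n) = ⋃ₖ P(T_k, m×n). -/
def PT (m n : ℕ) : Set (Pat A16 m n) := ⋃ k : ℕ, patIn (Tfun k) (2 ^ k) m n

/-- μ applied to an m×n pattern, as a total 2m×2n array on ℕ × ℕ
(indices are reduced mod the valid range; in range this is exactly μ(p)). -/
def muPatE {m n : ℕ} (p : Pat A16 m n) (r c : ℕ) : A16 :=
  if hm : 0 < m then
    if hn : 0 < n then
      muE (p ⟨r / 2 % m, Nat.mod_lt _ hm⟩ ⟨c / 2 % n, Nat.mod_lt _ hn⟩) r c
    else .A
  else .A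

/-- μ² applied to an m×n pattern, as a total 4m×4n array on ℕ × ℕ. -/
def mu2PatE {m n : ℕ} (p : Pat A16 m n) (r c : ℕ) : A16 :=
  muE (muPatE p (r / 2) (c / 2)) r c

/-- P_{i,j}(T, m×n) = { μ(x)[i,j,m×n] : x ∈ P(T,m×n) } (1-based corner (i,j)). -/
def Pij (i j m n : ℕ) : Set (Pat A16 m n) :=
  { q | ∃ x ∈ PT m n, ∀ (a : Fin m) (b : Fin n),
      q a b = muPatE x (i - 1 + a) (j - 1 + b) }

/-- Q_{i,j}(T, m×n) = { μ²(x)[i,j,m×n] : x ∈ P(T,m×n) } (1-based corner (i,j)). -/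
def Qij (i j m n : ℕ) : Set (Pat A16 m n) :=
  { q | ∃ x ∈ PT m n, ∀ (a : Fin m) (b : Fin n),
      q a b = mu2PatE x (i - 1 + a) (j - 1 + b) }

/-- The 2×2 block substitution φ from 𝒜 to ℬ = {0,1,2,3}. -/
def phi : A16 → Fin 2 → Fin 2 → Fin 4
  | .A => ![![0, 1], ![0, 0]]
  | .B => ![![0, 1], ![1, 1]]
  | .C => ![![1, 0], ![0, 0]]
  | .D => ![![1, 0], ![1, 1]]
  | .E => ![![0, 3], ![0, 2]]
  | .F => ![![0, 3], ![1, 3]]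
  | .G => ![![1, 2], ![0, 2]]
  | .H => ![![1, 2], ![1, 3]]
  | .I => ![![2, 1], ![2, 0]]
  | .J => ![![2, 1], ![3, 1]]
  | .K => ![![3, 0], ![2, 0]]
  | .L => ![![3, 0], ![3, 1]]
  | .M => ![![2, 3], ![2, 2]]
  | .N => ![![2, 3], ![3, 3]]
  | .O => ![![3, 2], ![2, 2]]
  | .P => ![![3, 2], ![3, 3]]

/-- Entry version of φ, indexed by arbitrary naturals (via mod 2). -/
def phiE (x : A16) (r c : ℕ) : Fin 4 :=
  phi x ⟨r % 2, by omega⟩ ⟨c % 2, by omega⟩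

/-- φ applied to an m×n pattern over 𝒜, as a total 2m×2n array on ℕ × ℕ. -/
def phiPatE {m n : ℕ} (p : Pat A16 m n) (r c : ℕ) : Fin 4 :=
  if hm : 0 < m then
    if hn : 0 < n then
      phiE (p ⟨r / 2 % m, Nat.mod_lt _ hm⟩ ⟨c / 2 % n, Nat.mod_lt _ hn⟩) r c
    else 0
  else 0

/-- φ(T_k), a 2^(k+1)×2^(k+1) array over ℬ. -/
def Sfun (k : ℕ) (r c : ℕ) : Fin 4 := phiE (Tfun k (r / 2) (c / 2)) r c

/-- P(S, m×n) = ⋃_{k≥1} P(φ(T_{k-1}), m×n). -/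
def PS (m n : ℕ) : Set (Pat (Fin 4) m n) :=
  ⋃ k : ℕ, patIn (Sfun k) (2 ^ (k + 1)) m n

/-- P_{i,j}(S, m×n) = { φ(x)[i,j,m×n] : x ∈ P(T,m×n) } (1-based corner (i,j)). -/
def PSij (i j m n : ℕ) : Set (Pat (Fin 4) m n) :=
  { q | ∃ x ∈ PT m n, ∀ (a : Fin m) (b : Fin n),
      q a b = phiPatE x (i - 1 + a) (j - 1 + b) }

/-- A_n = |P(S, n×n)|. -/
noncomputable def Acnt (n : ℕ) : ℕ := Nat.card (PS n n)

/-- a_{i,j}(n) = |P_{i,j}(T, n×n)|. -/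
noncomputable def aT (i j n : ℕ) : ℕ := Nat.card (Pij i j n n)

/-- b_{i,j}(n) = |P_{i,j}(T, n×(n+1))|. -/
noncomputable def bT (i j n : ℕ) : ℕ := Nat.card (Pij i j n (n + 1))

/-- c_{i,j}(n) = |P_{i,j}(T, (n+1)×n)|. -/
noncomputable def cT (i j n : ℕ) : ℕ := Nat.card (Pij i j (n + 1) n)

/-!
Writing `P k` for the set of `m×m` patterns of `T_k`, the sequence `P` is increasing because
`T_k` sits in the top-right quadrant of `T_{k+1}` (the top-right letter of `μ(N)` is `N`).
Conversely, since `T_{k+2} = μ(T_{k+1})`, every `m×m` window of `T_{k+2}` lies inside `μ(w)` for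
some `m×m` window `w` of `T_{k+1}`; if `w` already occurs in `T_k`, then `μ(w)` occurs in
`T_{k+1}`. Hence `P (k+1) ⊆ P k` implies `P (k+2) ⊆ P (k+1)`, and one plateau propagates forever.
-/

def blockSubst {α : Type} (σ : α → Fin 2 → Fin 2 → α) (X : ℕ → ℕ → α) (r c : ℕ) : α :=
  σ (X (r / 2) (c / 2)) ⟨r % 2, Nat.mod_lt _ two_pos⟩ ⟨c % 2, Nat.mod_lt _ two_pos⟩

lemma superE_succ (k : ℕ) (x : A16) : superE (k + 1) x = blockSubst mu (superE k x) := rfl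

lemma Tfun_succ (k : ℕ) : Tfun (k + 1) = blockSubst mu (Tfun k) := rfl

lemma blockSubst_eq_blockSubst {α : Type} (σ : α → Fin 2 → Fin 2 → α) {X X' : ℕ → ℕ → α}
    {r c r' c' : ℕ} (hX : X (r / 2) (c / 2) = X' (r' / 2) (c' / 2)) (hr : r % 2 = r' % 2)
    (hc : c % 2 = c' % 2) : blockSubst σ X r c = blockSubst σ X' r' c' := by
  simp only [blockSubst, hX, hr, hc]

/-- The rows `r, …, r + m - 1` of an array of height `2 s` come from the rows
`u, …, u + m - 1` of its preimage under a `2×2` substitution. -/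
lemma exists_halving_window {m s r : ℕ} (hm : 1 ≤ m) (hms : m ≤ s) (hr : r + m ≤ 2 * s) :
    ∃ u, u + m ≤ s ∧ 2 * u ≤ r ∧ r ≤ 2 * u + m :=
  ⟨min (r / 2) (s - m), by omega, by omega, by omega⟩

lemma patIn_blockSubst_subset {α : Type} (σ : α → Fin 2 → Fin 2 → α) {X X' : ℕ → ℕ → α}
    {s s' m n : ℕ} (hm : 1 ≤ m) (hn : 1 ≤ n) (hms : m ≤ s) (hns : n ≤ s)
    (h : patIn X s m n ⊆ patIn X' s' m n) :
    patIn (blockSubst σ X) (2 * s) m n ⊆ patIn (blockSubst σ X') (2 * s') m n := by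
  rintro p ⟨r, c, hr, hc, hp⟩
  obtain ⟨u, hus, hur, hru⟩ := exists_halving_window hm hms hr
  obtain ⟨v, hvs, hvc, hcv⟩ := exists_halving_window hn hns hc
  obtain ⟨r₀, c₀, hr₀, hc₀, hq⟩ :=
    h (show (fun (a : Fin m) (b : Fin n) => X (u + a) (v + b)) ∈ patIn X s m n from
      ⟨u, v, hus, hvs, fun _ _ => rfl⟩)
  refine ⟨2 * r₀ + (r - 2 * u), 2 * c₀ + (c - 2 * v), by omega, by omega, fun i j => ?_⟩
  have hi := i.isLt
  have hj := j.isLt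
  have key := hq ⟨(r - 2 * u + i) / 2, by omega⟩ ⟨(c - 2 * v + j) / 2, by omega⟩
  rw [hp i j]
  refine blockSubst_eq_blockSubst σ ?_ (by omega) (by omega)
  convert key using 2 <;> simp only <;> omega

lemma patIn_subset_of_embedding {α : Type} {X X' : ℕ → ℕ → α} {s s' a b m n : ℕ}
    (ha : a + s ≤ s') (hb : b + s ≤ s')
    (hX : ∀ r c, r < s → c < s → X' (a + r) (b + c) = X r c) :
    patIn X s m n ⊆ patIn X' s' m n := by
  rintro p ⟨r, c, hr, hc, hp⟩
  refine ⟨a + r, b + c, by omega, by omega, fun i j => ?_⟩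
  rw [hp i j, add_assoc, add_assoc, hX _ _ (by omega) (by omega)]

lemma superE_succ_apply_pow_add {x : A16} (hx : mu x 0 1 = x) :
    ∀ k r c, r < 2 ^ k → c < 2 ^ k → superE (k + 1) x r (2 ^ k + c) = superE k x r c
  | 0, r, c, hr, hc => by
    obtain rfl : r = 0 := by omega
    obtain rfl : c = 0 := by omega
    exact hx
  | k + 1, r, c, hr, hc => by
    rw [superE_succ, superE_succ]
    refine blockSubst_eq_blockSubst mu ?_ rfl (by omega)
    rw [show (2 ^ (k + 1) + c) / 2 = 2 ^ k + c / 2 by omega]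
    exact superE_succ_apply_pow_add hx k _ _ (by omega) (by omega)

lemma patIn_Tfun_subset_succ (k m n : ℕ) :
    patIn (Tfun k) (2 ^ k) m n ⊆ patIn (Tfun (k + 1)) (2 ^ (k + 1)) m n :=
  patIn_subset_of_embedding (a := 0) (b := 2 ^ k) (by rw [pow_succ]; omega)
    (by rw [pow_succ]; omega) fun r c hr hc => by
      rw [zero_add]
      exact superE_succ_apply_pow_add rfl k r c hr hc

lemma patIn_Tfun_succ_succ_subset {k m : ℕ} (hm : 1 ≤ m) (hmk : m ≤ 2 ^ (k + 1))
    (h : patIn (Tfun (k + 1)) (2 ^ (k + 1)) m m ⊆ patIn (Tfun k) (2 ^ k) m m) :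
    patIn (Tfun (k + 2)) (2 ^ (k + 2)) m m ⊆ patIn (Tfun (k + 1)) (2 ^ (k + 1)) m m := by
  rw [pow_succ'] at hmk
  simpa only [Tfun_succ, pow_succ'] using
    patIn_blockSubst_subset mu hm hm hmk hmk (by simpa only [Tfun_succ, pow_succ'] using h)

lemma Monotone.apply_add_eq_of_succ_le {β : Type} [PartialOrder β] {P : ℕ → β}
    (hP : Monotone P) {n : ℕ}
    (hstep : ∀ k, P (n + k + 1) ≤ P (n + k) → P (n + k + 2) ≤ P (n + k + 1))
    (h : P (n + 1) ≤ P n) (k : ℕ) : P (n + k) = P n := by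
  have hle : ∀ k, P (n + k + 1) ≤ P (n + k) := fun k => by
    induction k with
    | zero => exact h
    | succ k ih => exact hstep k ih
  induction k with
  | zero => rfl
  | succ k ih => exact ((hle k).antisymm (hP (Nat.le_succ _))).trans ih

/-- Lemma 3.2: if P(T_n, m×m) = P(T_{n+1}, m×m) for some n with m ≤ 2ⁿ, then
P(T_n, m×m) = P(T_{n+k}, m×m) for all k ≥ 1, and P(T_n, m×m) = P(T, m×m). -/
theorem unique_plateau (m : ℕ) (hm : 1 ≤ m) (n : ℕ) (hmn : m ≤ 2 ^ n)
    (h : patIn (Tfun n) (2 ^ n) m m = patIn (Tfun (n + 1)) (2 ^ (n + 1)) m m) :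
    (∀ k : ℕ, 1 ≤ k →
        patIn (Tfun n) (2 ^ n) m m = patIn (Tfun (n + k)) (2 ^ (n + k)) m m) ∧
      patIn (Tfun n) (2 ^ n) m m = PT m m := by
  set P : ℕ → Set (Pat A16 m m) := fun k => patIn (Tfun k) (2 ^ k) m m
  have hP : Monotone P := monotone_nat_of_le_succ fun k => patIn_Tfun_subset_succ k m m
  have hstable : ∀ k, P (n + k) = P n := hP.apply_add_eq_of_succ_le
    (fun k => patIn_Tfun_succ_succ_subset hm
      (hmn.trans (Nat.pow_le_pow_right two_pos (by omega))))
    h.ge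
  refine ⟨fun k _ => (hstable k).symm, ?_⟩
  refine (Set.subset_iUnion P n).antisymm (Set.iUnion_subset fun k => ?_)
  calc P k ⊆ P (n + k) := hP (Nat.le_add_left k n)
    _ = P n := hstable k
end

section
/- For all integers m, n ≥ 1, P(T, m×n) = ⋃_{i,j∈{1,2}} P_{i,j}(T, m×n), and the four sets P_{i,j}(T, m×n) for i,j∈{1,2} are non-empty and pairwise disjoint. -/
/-!
The letter `A` sits in the top-left corner of `μ(A)`, so the squares `μᵏ(A)` are nested and
grow into a one-quadrant fixed point `u = μ^∞(A)`. Each of `T_k` and `μᵏ(A)` occurs inside a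
later square of the other family (`N` occurs in `μ²(A)` and `A` in `μ³(N)`), hence
`P(T, m×n)` is the set of `m×n` patterns of `u`. Since `μ(u) = u`, the pattern of `u` at
`(r, c)` is cut from `μ` of the pattern at `(r / 2, c / 2)` at the offset `(r % 2, c % 2)`, and
conversely. Disjointness holds because each letter occurs in the images of `μ` at a single
position of the `2×2` block, so the top-left letter of a pattern in `P_{i,j}` reveals `(i, j)`.
-/

/-- The position at which a letter occurs in the images of `μ`. -/
def quadrant : A16 → ℕ × ℕ
  | .A | .B | .I | .J => (0, 0)
  | .E | .F | .M | .N => (0, 1)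
  | .G | .H | .O | .P => (1, 0)
  | .C | .D | .K | .L => (1, 1)

lemma quadrant_muE (x : A16) (r c : ℕ) : quadrant (muE x r c) = (r % 2, c % 2) := by
  have key : ∀ i j : Fin 2, quadrant (mu x i j) = ((i : ℕ), (j : ℕ)) := by cases x <;> decide
  exact key _ _

lemma muE_congr (x : A16) {r c r' c' : ℕ} (hr : r % 2 = r' % 2) (hc : c % 2 = c' % 2) :
    muE x r c = muE x r' c' := by
  simp only [muE, hr, hc]

lemma superE_add (K j : ℕ) (x : A16) (r c : ℕ) {a b : ℕ} (ha : a < 2 ^ K) (hb : b < 2 ^ K) :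
    superE (K + j) x (2 ^ K * r + a) (2 ^ K * c + b) = superE K (superE j x r c) a b := by
  induction K generalizing a b with
  | zero => simp_all [superE]
  | succ K ih =>
    have hpow : 2 ^ (K + 1) = 2 * 2 ^ K := pow_succ' 2 K
    have hdiv (s t : ℕ) : (2 ^ (K + 1) * s + t) / 2 = 2 ^ K * s + t / 2 := by
      rw [hpow, mul_assoc]; omega
    have hpar (s t : ℕ) : (2 ^ (K + 1) * s + t) % 2 = t % 2 := by
      rw [hpow, mul_assoc]; omega
    rw [Nat.add_right_comm, superE, superE, hdiv, hdiv, ih (by omega) (by omega)]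
    exact muE_congr _ (hpar r a) (hpar c b)

lemma superE_A_succ {K r c : ℕ} (hr : r < 2 ^ K) (hc : c < 2 ^ K) :
    superE (K + 1) .A r c = superE K .A r c := by
  have h := superE_add K 1 .A 0 0 hr hc
  simp only [mul_zero, zero_add] at h
  exact h

lemma superE_A_of_le {K K' r c : ℕ} (hK : K ≤ K') (hr : r < 2 ^ K) (hc : c < 2 ^ K) :
    superE K' .A r c = superE K .A r c := by
  induction K', hK using Nat.le_induction with
  | base => rfl
  | succ K' hK ih =>
    have hpow : 2 ^ K ≤ 2 ^ K' := Nat.pow_le_pow_right two_pos hK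
    rw [superE_A_succ (by omega) (by omega), ih]

/-- The fixed point `μ^∞(A)`, whose top-left `2ᵏ×2ᵏ` block is `μᵏ(A)`. -/
def muFix (r c : ℕ) : A16 := superE (r + c) .A r c

lemma lt_two_pow_add (r c : ℕ) : r < 2 ^ (r + c) :=
  (Nat.lt_two_pow_self).trans_le (Nat.pow_le_pow_right two_pos (Nat.le_add_right r c))

lemma superE_A_eq_muFix {K r c : ℕ} (hr : r < 2 ^ K) (hc : c < 2 ^ K) :
    superE K .A r c = muFix r c := by
  rw [← superE_A_of_le (Nat.le_add_right K (r + c)) hr hc, muFix,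
    superE_A_of_le (Nat.le_add_left (r + c) K) (lt_two_pow_add r c)]
  simpa [add_comm] using lt_two_pow_add c r

lemma muFix_eq_muE (r c : ℕ) : muFix r c = muE (muFix (r / 2) (c / 2)) r c := by
  have hr := lt_two_pow_add r c
  have hc := lt_two_pow_add c r
  rw [add_comm c] at hc
  rw [← superE_A_eq_muFix (K := r + c + 1) (by omega) (by omega), superE,
    superE_A_eq_muFix (by omega) (by omega)]

lemma superE_two_A : superE 2 .A 0 3 = .N := by decide

lemma superE_three_N : superE 3 .N 0 2 = .A := by decide

lemma Tfun_eq_superE_A {k a b : ℕ} (ha : a < 2 ^ k) (hb : b < 2 ^ k) :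
    Tfun k a b = superE (k + 2) .A a (3 * 2 ^ k + b) := by
  simpa [Tfun, superE_two_A, mul_comm] using (superE_add k 2 .A 0 3 ha hb).symm

lemma superE_A_eq_Tfun {K a b : ℕ} (ha : a < 2 ^ K) (hb : b < 2 ^ K) :
    superE K .A a b = Tfun (K + 3) a (2 * 2 ^ K + b) := by
  simpa [Tfun, superE_three_N, mul_comm] using (superE_add K 3 .N 0 2 ha hb).symm

def patOf {α : Type} (X : ℕ → ℕ → α) (m n : ℕ) : Set (Pat α m n) :=
  { p | ∃ r c : ℕ, ∀ (i : Fin m) (j : Fin n), p i j = X (r + i) (c + j) }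

lemma PT_eq_patOf_muFix (m n : ℕ) : PT m n = patOf muFix m n := by
  ext p
  constructor
  · rintro ⟨-, ⟨k, rfl⟩, r, c, hr, hc, hp⟩
    refine ⟨r, 3 * 2 ^ k + c, fun i j => ?_⟩
    have hk : 2 ^ (k + 2) = 4 * 2 ^ k := by ring
    rw [hp, Tfun_eq_superE_A (by omega) (by omega), superE_A_eq_muFix (by omega) (by omega),
      add_assoc]
  · rintro ⟨r, c, hp⟩
    set K := r + c + m + n
    have hK : K < 2 ^ K := Nat.lt_two_pow_self
    have hK3 : 2 ^ (K + 3) = 8 * 2 ^ K := by ring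
    refine Set.mem_iUnion.2 ⟨K + 3, r, 2 * 2 ^ K + c, by omega, by omega, fun i j => ?_⟩
    rw [hp, add_assoc (2 * 2 ^ K), ← superE_A_eq_muFix (K := K) (by omega) (by omega),
      superE_A_eq_Tfun (by omega) (by omega)]

lemma muPatE_eq_muFix {m n r c : ℕ} {x : Pat A16 m n}
    (hx : ∀ (i : Fin m) (j : Fin n), x i j = muFix (r + i) (c + j))
    {s t : ℕ} (hs : s < 2 * m) (ht : t < 2 * n) :
    muPatE x s t = muFix (2 * r + s) (2 * c + t) := by
  rw [muPatE, dif_pos (by omega), dif_pos (by omega), hx, muFix_eq_muE (2 * r + s)]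
  simp only [Nat.mod_eq_of_lt (show s / 2 < m by omega), Nat.mod_eq_of_lt (show t / 2 < n by omega)]
  rw [show (2 * r + s) / 2 = r + s / 2 by omega, show (2 * c + t) / 2 = c + t / 2 by omega]
  exact muE_congr _ (by omega) (by omega)

lemma Pij_subset_PT {i j m n : ℕ} (hi : i ≤ 2) (hj : j ≤ 2) : Pij i j m n ⊆ PT m n := by
  rintro q ⟨x, hx, hq⟩
  rw [PT_eq_patOf_muFix] at hx ⊢
  obtain ⟨r, c, hx⟩ := hx
  refine ⟨2 * r + (i - 1), 2 * c + (j - 1), fun a b => ?_⟩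
  rw [hq, muPatE_eq_muFix hx (by omega) (by omega), add_assoc, add_assoc]

lemma mem_Pij_of_eq_muFix {m n r c : ℕ} {q : Pat A16 m n}
    (hq : ∀ (a : Fin m) (b : Fin n), q a b = muFix (r + a) (c + b)) :
    q ∈ Pij (r % 2 + 1) (c % 2 + 1) m n := by
  refine ⟨fun a b => muFix (r / 2 + a) (c / 2 + b), ?_, fun a b => ?_⟩
  · rw [PT_eq_patOf_muFix]
    exact ⟨r / 2, c / 2, fun _ _ => rfl⟩
  · rw [hq, Nat.add_sub_cancel, Nat.add_sub_cancel,
      muPatE_eq_muFix (fun _ _ => rfl) (by omega) (by omega)]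
    congr 1 <;> omega

lemma Pij_nonempty (i j m n : ℕ) : (Pij i j m n).Nonempty := by
  refine ⟨_, fun a b => muFix a b, ?_, fun _ _ => rfl⟩
  rw [PT_eq_patOf_muFix]
  exact ⟨0, 0, fun a b => by simp⟩

lemma quadrant_of_mem_Pij {i j m n : ℕ} (hm : 0 < m) (hn : 0 < n) {q : Pat A16 m n}
    (hq : q ∈ Pij i j m n) : quadrant (q ⟨0, hm⟩ ⟨0, hn⟩) = ((i - 1) % 2, (j - 1) % 2) := by
  obtain ⟨x, -, hq⟩ := hq
  rw [hq, muPatE, dif_pos hm, dif_pos hn, quadrant_muE]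
  rfl

/-- Lemma 3.4: for m, n ≥ 1, P(T, m×n) is the union of the sets
P_{i,j}(T, m×n) for i,j ∈ {1,2}, which are non-empty and pairwise disjoint. -/
theorem disjoint_Pij_T (m n : ℕ) (hm : 1 ≤ m) (hn : 1 ≤ n) :
    (PT m n = ⋃ i ∈ ({1, 2} : Set ℕ), ⋃ j ∈ ({1, 2} : Set ℕ), Pij i j m n) ∧
    (∀ i ∈ ({1, 2} : Set ℕ), ∀ j ∈ ({1, 2} : Set ℕ), (Pij i j m n).Nonempty) ∧
    (∀ i ∈ ({1, 2} : Set ℕ), ∀ j ∈ ({1, 2} : Set ℕ),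
      ∀ i' ∈ ({1, 2} : Set ℕ), ∀ j' ∈ ({1, 2} : Set ℕ),
        (i, j) ≠ (i', j') → Disjoint (Pij i j m n) (Pij i' j' m n)) := by
  have mem_pair (i : ℕ) : i ∈ ({1, 2} : Set ℕ) ↔ i = 1 ∨ i = 2 := Iff.rfl
  refine ⟨Set.Subset.antisymm ?_ ?_, fun i _ j _ => Pij_nonempty i j m n, ?_⟩
  · intro q hq
    rw [PT_eq_patOf_muFix] at hq
    obtain ⟨r, c, hq⟩ := hq
    simp only [Set.mem_iUnion, exists_prop, mem_pair]
    exact ⟨_, by omega, _, by omega, mem_Pij_of_eq_muFix hq⟩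
  · simp only [Set.iUnion_subset_iff, mem_pair]
    intro i hi j hj
    exact Pij_subset_PT (by omega) (by omega)
  · intro i hi j hj i' hi' j' hj' hne
    rw [mem_pair] at hi hj hi' hj'
    refine Set.disjoint_left.2 fun q hq hq' => hne ?_
    have hquad := (quadrant_of_mem_Pij hm hn hq).symm.trans (quadrant_of_mem_Pij hm hn hq')
    simp only [Prod.mk.injEq] at hquad ⊢
    omega
end

section
/- Let m, n ≥ 1 and let x, y ∈ P(T, m×n). Then for i, j ∈ {1,2}, μ(x)[i,j, m×n] = μ(y)[i,j, m×n] if and only if φ(x)[i,j, m×n] = φ(y)[i,j, m×n]. -/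
lemma mu_phi_cell_key : ∀ a b : A16, ∀ p q : Fin 2,
    (mu a p q = mu b p q ↔ phi a p q = phi b p q) := by
  intro a b
  cases a <;> cases b <;> decide

/-- Lemma 3.7: for m, n ≥ 1, x, y ∈ P(T, m×n) and i, j ∈ {1,2},
μ(x)[i,j,m×n] = μ(y)[i,j,m×n] iff φ(x)[i,j,m×n] = φ(y)[i,j,m×n]. -/
theorem mu_eq_iff_phi_eq (m n : ℕ) (hm : 1 ≤ m) (hn : 1 ≤ n)
    (x y : Pat A16 m n) (hx : x ∈ PT m n) (hy : y ∈ PT m n)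
    (i j : ℕ) (hi : i ∈ ({1, 2} : Set ℕ)) (hj : j ∈ ({1, 2} : Set ℕ)) :
    ((fun (a : Fin m) (b : Fin n) => muPatE x (i - 1 + a) (j - 1 + b)) =
        fun (a : Fin m) (b : Fin n) => muPatE y (i - 1 + a) (j - 1 + b)) ↔
      ((fun (a : Fin m) (b : Fin n) => phiPatE x (i - 1 + a) (j - 1 + b)) =
        fun (a : Fin m) (b : Fin n) => phiPatE y (i - 1 + a) (j - 1 + b)) := by
  have hm' : 0 < m := hm
  have hn' : 0 < n := hn
  constructor
  · intro h
    funext a b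
    have h' := congrFun (congrFun h a) b
    simp only [muPatE, phiPatE, muE, phiE, dif_pos hm', dif_pos hn'] at h' ⊢
    exact (mu_phi_cell_key _ _ _ _).mp h'
  · intro h
    funext a b
    have h' := congrFun (congrFun h a) b
    simp only [muPatE, phiPatE, muE, phiE, dif_pos hm', dif_pos hn'] at h' ⊢
    exact (mu_phi_cell_key _ _ _ _).mpr h'
end

section
/- For every integer n ≥ 1: a_{1,2}(2n) = a_{2,1}(2n) = a_{2,2}(2n), and a_{1,1}(2n+1) = b_{1,2}(2n+1). -/
namespace Supertile

lemma muE_congr (x : A16) {r c r' c' : ℕ} (hr : r % 2 = r' % 2) (hc : c % 2 = c' % 2) :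
    muE x r c = muE x r' c' := by
  simp only [muE, hr, hc]

lemma Tfun_succ_two_mul_add (k r c u v : ℕ) :
    Tfun (k + 1) (2 * r + u) (2 * c + v) = muE (Tfun k (r + u / 2) (c + v / 2)) u v := by
  have hr : (2 * r + u) / 2 = r + u / 2 := by omega
  have hc : (2 * c + v) / 2 = c + v / 2 := by omega
  simp only [Tfun, superE, hr, hc]
  exact muE_congr _ (by omega) (by omega)

lemma superE_mod_two_pow (k : ℕ) (x : A16) (r c : ℕ) :
    superE k x (r % 2 ^ k) (c % 2 ^ k) = superE k x r c := by
  induction k generalizing r c with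
  | zero => rfl
  | succ k ih =>
    have hr : r % 2 ^ (k + 1) / 2 = r / 2 % 2 ^ k := by
      rw [pow_succ', Nat.mod_mul_right_div_self]
    have hc : c % 2 ^ (k + 1) / 2 = c / 2 % 2 ^ k := by
      rw [pow_succ', Nat.mod_mul_right_div_self]
    simp only [superE, hr, hc, ih]
    exact muE_congr _ (Nat.mod_mod_of_dvd r (dvd_pow_self 2 k.succ_ne_zero))
      (Nat.mod_mod_of_dvd c (dvd_pow_self 2 k.succ_ne_zero))

lemma superE_add (a b : ℕ) (x : A16) (r c : ℕ) :
    superE (a + b) x r c = superE b (superE a x (r / 2 ^ b) (c / 2 ^ b)) r c := by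
  induction b generalizing r c with
  | zero => simp [superE]
  | succ b ih =>
    rw [← add_assoc, superE, superE, ih, Nat.div_div_eq_div_mul, Nat.div_div_eq_div_mul,
      ← pow_succ']

/-- `T_3` has the letter `N` at row 4, column 3, so `T_{k+3}` contains a copy of `T_k`
surrounded by at least `3 · 2^k` cells on every side. -/
lemma Tfun_add_three (k i j : ℕ) (hi : i < 2 ^ k) (hj : j < 2 ^ k) :
    Tfun (k + 3) (4 * 2 ^ k + i) (3 * 2 ^ k + j) = Tfun k i j := by
  have hpos : 0 < 2 ^ k := Nat.two_pow_pos k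
  have hr : (4 * 2 ^ k + i) / 2 ^ k = 4 := by
    rw [Nat.add_comm, Nat.add_mul_div_right _ _ hpos, Nat.div_eq_of_lt hi]
  have hc : (3 * 2 ^ k + j) / 2 ^ k = 3 := by
    rw [Nat.add_comm, Nat.add_mul_div_right _ _ hpos, Nat.div_eq_of_lt hj]
  have hr' : (4 * 2 ^ k + i) % 2 ^ k = i := by
    rw [Nat.add_comm, Nat.add_mul_mod_self_right, Nat.mod_eq_of_lt hi]
  have hc' : (3 * 2 ^ k + j) % 2 ^ k = j := by
    rw [Nat.add_comm, Nat.add_mul_mod_self_right, Nat.mod_eq_of_lt hj]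
  have hN : superE 3 .N 4 3 = .N := by decide
  rw [Tfun, Nat.add_comm k 3, superE_add, hr, hc, hN, ← superE_mod_two_pow, hr', hc']
  rfl

lemma exists_eq_succ_of_two_le_two_pow {l : ℕ} (h : 2 ≤ 2 ^ l) : ∃ k, l = k + 1 :=
  Nat.exists_eq_add_one.2 (Nat.pos_of_ne_zero (by rintro rfl; simp at h))

/-- A `2 × 2` array of letters, listed as (top left, top right, bottom left, bottom right). -/
abbrev Block := A16 × A16 × A16 × A16

def Block.entry (w : Block) (i j : ℕ) : A16 :=
  if i = 0 then (if j = 0 then w.1 else w.2.1) else (if j = 0 then w.2.2.1 else w.2.2.2)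

/-- The `4 × 4` array `μ(w)`. -/
def Block.expand (w : Block) (i j : ℕ) : A16 := muE (w.entry (i / 2) (j / 2)) i j

def blockAt (X : ℕ → ℕ → A16) (r c : ℕ) : Block :=
  (X r c, X r (c + 1), X (r + 1) c, X (r + 1) (c + 1))

lemma blockAt_entry (X : ℕ → ℕ → A16) (r c : ℕ) {i j : ℕ} (hi : i < 2) (hj : j < 2) :
    (blockAt X r c).entry i j = X (r + i) (c + j) := by
  interval_cases i <;> interval_cases j <;> rfl

lemma blockAt_congr {X Y : ℕ → ℕ → A16} {r c r' c' : ℕ}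
    (h : ∀ i < 2, ∀ j < 2, X (r + i) (c + j) = Y (r' + i) (c' + j)) :
    blockAt X r c = blockAt Y r' c' := by
  have h00 := h 0 (by norm_num) 0 (by norm_num)
  have h01 := h 0 (by norm_num) 1 (by norm_num)
  have h10 := h 1 (by norm_num) 0 (by norm_num)
  have h11 := h 1 (by norm_num) 1 (by norm_num)
  simp only [add_zero] at h00 h01 h10
  simp only [blockAt, h00, h01, h10, h11]

lemma Tfun_succ_eq_expand (k r c : ℕ) {i j : ℕ} (hi : i < 4) (hj : j < 4) :
    Tfun (k + 1) (2 * r + i) (2 * c + j) = (blockAt (Tfun k) r c).expand i j := by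
  rw [Block.expand, blockAt_entry _ _ _ (by omega) (by omega), Tfun_succ_two_mul_add]

open A16 in
/-- The 76 `2 × 2` blocks that occur in the supertiles. -/
def legalBlocks : List Block := [
    (A, F, G, C), (A, F, H, D), (A, N, G, K), (A, N, H, L), (B, E, G, C), (B, E, H, D),
    (B, M, G, K), (B, M, H, L), (C, G, N, I), (C, H, M, B), (C, H, N, A), (C, O, N, A),
    (C, P, M, J), (C, P, N, I), (D, G, M, B), (D, G, N, A), (D, H, N, I), (D, O, M, J),
    (D, O, N, I), (D, P, N, A), (E, B, C, G), (E, B, C, H), (E, B, D, G), (E, B, D, H),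
    (E, J, C, O), (E, J, C, P), (E, J, D, O), (E, J, D, P), (F, A, C, H), (F, A, D, G),
    (F, I, C, P), (F, I, D, O), (G, C, B, M), (G, C, I, N), (G, K, A, F), (G, K, B, E),
    (G, K, I, F), (H, D, B, M), (H, D, I, N), (H, L, A, F), (H, L, B, E), (H, L, I, F),
    (I, F, O, C), (I, F, P, D), (I, N, O, K), (I, N, P, L), (J, E, O, C), (J, E, P, D),
    (J, M, O, K), (J, M, P, L), (K, G, F, I), (K, H, E, B), (K, O, F, A), (K, P, E, J),
    (L, G, E, B), (L, H, F, I), (L, O, E, J), (L, P, F, A), (M, B, K, G), (M, B, L, H),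
    (M, J, K, O), (M, J, L, P), (N, A, K, H), (N, A, L, G), (N, I, K, P), (N, I, L, O),
    (O, C, A, N), (O, C, J, M), (O, K, A, F), (O, K, I, F), (O, K, J, E), (P, D, A, N),
    (P, D, J, M), (P, L, A, F), (P, L, I, F), (P, L, J, E)]

theorem blockAt_expand_mem_legalBlocks :
    ∀ w ∈ legalBlocks, ∀ i < 3, ∀ j < 3, blockAt w.expand i j ∈ legalBlocks := by
  decide

/-- Every `2 × 2` block of `T_{k+1}` lies inside `μ(w)` for a `2 × 2` block `w` of `T_k`. -/
theorem blockAt_Tfun_mem_legalBlocks {k r c : ℕ} (hr : r + 2 ≤ 2 ^ k) (hc : c + 2 ≤ 2 ^ k) :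
    blockAt (Tfun k) r c ∈ legalBlocks := by
  induction k generalizing r c with
  | zero => simp at hr
  | succ k ih =>
    rcases k with _ | k
    · obtain rfl : r = 0 := by simp at hr; omega
      obtain rfl : c = 0 := by simp at hc; omega
      decide
    · have hpow : 2 ^ (k + 2) = 2 * 2 ^ (k + 1) := pow_succ' 2 (k + 1)
      have hpos : 2 ≤ 2 ^ (k + 1) := Nat.le_self_pow (by omega) 2
      set r₀ := min (r / 2) (2 ^ (k + 1) - 2)
      set c₀ := min (c / 2) (2 ^ (k + 1) - 2)
      have hsub : blockAt (Tfun (k + 2)) r c =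
          blockAt (blockAt (Tfun (k + 1)) r₀ c₀).expand (r - 2 * r₀) (c - 2 * c₀) :=
        blockAt_congr fun i hi j hj => by
          rw [← Tfun_succ_eq_expand _ _ _ (by omega) (by omega)]
          congr 1 <;> omega
      rw [hsub]
      exact blockAt_expand_mem_legalBlocks _ (ih (by omega) (by omega)) _ (by omega) _ (by omega)

/-- The `3 × 3` window of `μ(w)` at row `0`, column `1` (that is, at an even row and an odd
column of the supertile) is determined by its `2 × 2` sub-block at `(a, b)`. -/
def BlockDetermines (a b : ℕ) : Prop :=
  ∀ w ∈ legalBlocks, ∀ w' ∈ legalBlocks,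
    (∀ i < 2, ∀ j < 2, w.expand (a + i) (1 + (b + j)) = w'.expand (a + i) (1 + (b + j))) →
      ∀ i < 3, ∀ j < 3, w.expand i (1 + j) = w'.expand i (1 + j)

instance (a b : ℕ) : Decidable (BlockDetermines a b) :=
  inferInstanceAs (Decidable (∀ w ∈ legalBlocks, _))

theorem blockDetermines_zero_zero : BlockDetermines 0 0 := by decide +kernel

theorem blockDetermines_one_zero : BlockDetermines 1 0 := by decide +kernel

theorem blockDetermines_one_one : BlockDetermines 1 1 := by decide +kernel

structure Site where
  level : ℕ
  row : ℕ
  col : ℕ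

namespace Site

def entry (s : Site) (i j : ℕ) : A16 := Tfun s.level (s.row + i) (s.col + j)

def window (s : Site) (m n : ℕ) : Pat A16 m n := fun a b => s.entry a b

def shift (s : Site) (a b : ℕ) : Site := ⟨s.level, s.row + a, s.col + b⟩

def Fits (s : Site) (p q m n : ℕ) : Prop :=
  s.row % 2 = p ∧ s.col % 2 = q ∧ s.row + m ≤ 2 ^ s.level ∧ s.col + n ≤ 2 ^ s.level

def AgreeOn (s s' : Site) (a b m n : ℕ) : Prop :=
  ∀ i j, a ≤ i → i < a + m → b ≤ j → j < b + n → s.entry i j = s'.entry i j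

@[simp] lemma shift_level (s : Site) (a b : ℕ) : (s.shift a b).level = s.level := rfl
@[simp] lemma shift_row (s : Site) (a b : ℕ) : (s.shift a b).row = s.row + a := rfl
@[simp] lemma shift_col (s : Site) (a b : ℕ) : (s.shift a b).col = s.col + b := rfl

lemma agreeOn_shift_iff {s s' : Site} {c d a b m n : ℕ} :
    (s.shift c d).AgreeOn (s'.shift c d) a b m n ↔ s.AgreeOn s' (c + a) (d + b) m n := by
  constructor
  · intro h i j hai him hbj hjn
    simpa [entry, add_assoc, Nat.add_sub_cancel' (le_trans (Nat.le_add_right c a) hai),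
      Nat.add_sub_cancel' (le_trans (Nat.le_add_right d b) hbj)]
      using h (i - c) (j - d) (by omega) (by omega) (by omega) (by omega)
  · intro h i j hai him hbj hjn
    simpa [entry, add_assoc] using h (c + i) (d + j) (by omega) (by omega) (by omega) (by omega)

lemma window_eq_iff {s s' : Site} {m n : ℕ} :
    s.window m n = s'.window m n ↔ s.AgreeOn s' 0 0 m n := by
  constructor
  · intro h i j _ him _ hjn
    exact congrFun (congrFun h ⟨i, by omega⟩) ⟨j, by omega⟩
  · intro h
    funext i j
    exact h i j (Nat.zero_le _) (by omega) (Nat.zero_le _) (by omega)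

lemma shift_window_eq_iff {s s' : Site} {a b m n : ℕ} :
    (s.shift a b).window m n = (s'.shift a b).window m n ↔ s.AgreeOn s' a b m n := by
  rw [window_eq_iff, agreeOn_shift_iff, add_zero, add_zero]

lemma AgreeOn.mono {s s' : Site} {a b m n a' b' m' n' : ℕ} (h : s.AgreeOn s' a b m n)
    (ha : a ≤ a') (hm : a' + m' ≤ a + m) (hb : b ≤ b') (hn : b' + n' ≤ b + n) :
    s.AgreeOn s' a' b' m' n' :=
  fun i j hai him hbj hjn => h i j (by omega) (by omega) (by omega) (by omega)

lemma Fits.mono {s : Site} {p q m n m' n' : ℕ} (hs : s.Fits p q m n) (hm : m' ≤ m)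
    (hn : n' ≤ n) : s.Fits p q m' n' :=
  ⟨hs.1, hs.2.1, by have := hs.2.2.1; omega, by have := hs.2.2.2; omega⟩

def parentBlock (s : Site) : Block := blockAt (Tfun (s.level - 1)) (s.row / 2) (s.col / 2)

lemma parentBlock_mem {s : Site} (hs : s.Fits 0 1 3 3) : s.parentBlock ∈ legalBlocks := by
  obtain ⟨hp, hq, hr, hc⟩ := hs
  obtain ⟨k, hk⟩ := exists_eq_succ_of_two_le_two_pow (l := s.level) (by omega)
  rw [hk, pow_succ] at hr hc
  rw [parentBlock, hk, Nat.add_sub_cancel]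
  exact blockAt_Tfun_mem_legalBlocks (by omega) (by omega)

lemma entry_eq_expand {s : Site} (hs : s.Fits 0 1 3 3) {i j : ℕ} (hi : i < 3) (hj : j < 3) :
    s.entry i j = s.parentBlock.expand i (1 + j) := by
  obtain ⟨hp, hq, hr, -⟩ := hs
  obtain ⟨k, hk⟩ := exists_eq_succ_of_two_le_two_pow (l := s.level) (by omega)
  rw [entry, parentBlock, hk, Nat.add_sub_cancel,
    ← Tfun_succ_eq_expand _ _ _ (by omega) (by omega)]
  congr 1 <;> omega

lemma agreeOn_of_blockDetermines {s s' : Site} {a b : ℕ} (hab : BlockDetermines a b)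
    (ha : a ≤ 1) (hb : b ≤ 1) (hs : s.Fits 0 1 3 3) (hs' : s'.Fits 0 1 3 3)
    (h : s.AgreeOn s' a b 2 2) : s.AgreeOn s' 0 0 3 3 := by
  intro i j _ hi _ hj
  rw [entry_eq_expand hs (by omega) (by omega), entry_eq_expand hs' (by omega) (by omega)]
  refine hab _ (parentBlock_mem hs) _ (parentBlock_mem hs') (fun u hu v hv => ?_)
    i (by omega) j (by omega)
  rw [← entry_eq_expand hs (by omega) (by omega), ← entry_eq_expand hs' (by omega) (by omega)]
  exact h _ _ (by omega) (by omega) (by omega) (by omega)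

lemma AgreeOn.extend {s s' : Site} {a b h w : ℕ} (hab : BlockDetermines a b) (ha : a ≤ 1)
    (hb : b ≤ 1) (hh : 1 ≤ h) (hw : 1 ≤ w) (hs : s.Fits 0 1 (2 * h + 1) (2 * w + 1))
    (hs' : s'.Fits 0 1 (2 * h + 1) (2 * w + 1)) (hagree : s.AgreeOn s' a b (2 * h) (2 * w)) :
    s.AgreeOn s' 0 0 (2 * h + 1) (2 * w + 1) := by
  intro x y _ hx _ hy
  set i := min (x / 2) (h - 1)
  set j := min (y / 2) (w - 1)
  have hfit : ∀ {t : Site}, t.Fits 0 1 (2 * h + 1) (2 * w + 1) →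
      (t.shift (2 * i) (2 * j)).Fits 0 1 3 3 := by
    intro t ht
    simp only [Fits, shift_row, shift_col, shift_level] at ht ⊢
    omega
  have hwindow := agreeOn_of_blockDetermines hab ha hb (hfit hs) (hfit hs')
    (agreeOn_shift_iff.2 (hagree.mono (by omega) (by omega) (by omega) (by omega)))
  exact agreeOn_shift_iff.1 hwindow x y (by omega) (by omega) (by omega) (by omega)

end Site

def parityPatterns (p q m n : ℕ) : Set (Pat A16 m n) :=
  {pat | ∃ s : Site, s.Fits p q m n ∧ s.window m n = pat}

/-- A pattern also occurs with room for its parent window under `μ` (hence `2 * m`) and for one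
more row and column before it. -/
lemma exists_deep_site {p q m n : ℕ} {pat : Pat A16 m n} (hm : 2 ≤ m)
    (h : pat ∈ parityPatterns p q m n) :
    ∃ s : Site, s.Fits p q (2 * m) (2 * n) ∧ 1 ≤ s.row ∧ 1 ≤ s.col ∧ s.window m n = pat := by
  obtain ⟨s, ⟨hp, hq, hr, hc⟩, rfl⟩ := h
  obtain ⟨k, hk⟩ := exists_eq_succ_of_two_le_two_pow (l := s.level) (by omega)
  have h8 : 2 ^ (s.level + 3) = 8 * 2 ^ s.level := by rw [pow_add]; ring
  have heven : 2 ^ s.level = 2 * 2 ^ k := by rw [hk, pow_succ']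
  refine ⟨⟨s.level + 3, 4 * 2 ^ s.level + s.row, 3 * 2 ^ s.level + s.col⟩,
    ⟨?_, ?_, ?_, ?_⟩, ?_, ?_, ?_⟩
  any_goals (dsimp only; omega)
  funext a b
  simp only [Site.window, Site.entry, add_assoc]
  exact Tfun_add_three _ _ _ (by omega) (by omega)

lemma muPatE_eq {m n : ℕ} (x : Pat A16 m n) {u v : ℕ} (hu : u / 2 < m) (hv : v / 2 < n) :
    muPatE x u v = muE (x ⟨u / 2, hu⟩ ⟨v / 2, hv⟩) u v := by
  simp only [muPatE, dif_pos (Nat.zero_lt_of_lt hu), dif_pos (Nat.zero_lt_of_lt hv),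
    Nat.mod_eq_of_lt hu, Nat.mod_eq_of_lt hv]

theorem Pij_eq_parityPatterns (i j : ℕ) {m n : ℕ} (hi : 1 ≤ i) (hi' : i ≤ 2) (hj : 1 ≤ j)
    (hj' : j ≤ 2) (hm : 2 ≤ m) (hn : 1 ≤ n) :
    Pij i j m n = parityPatterns (i - 1) (j - 1) m n := by
  ext pat
  constructor
  · rintro ⟨x, hx, hpat⟩
    obtain ⟨k, r, c, hr, hc, hxe⟩ := Set.mem_iUnion.1 hx
    have hpow : 2 ^ (k + 1) = 2 * 2 ^ k := pow_succ' 2 k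
    refine ⟨⟨k + 1, 2 * r + (i - 1), 2 * c + (j - 1)⟩, ⟨?_, ?_, ?_, ?_⟩, ?_⟩
    any_goals (dsimp only; omega)
    funext a b
    rw [hpat, muPatE_eq x (by omega) (by omega), hxe]
    simp only [Site.window, Site.entry, add_assoc]
    exact Tfun_succ_two_mul_add _ _ _ _ _
  · intro hpat
    obtain ⟨s, ⟨hp, hq, hr, hc⟩, -, -, rfl⟩ := exists_deep_site hm hpat
    obtain ⟨k, hk⟩ := exists_eq_succ_of_two_le_two_pow (l := s.level) (by omega)
    rw [hk, pow_succ'] at hr hc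
    refine ⟨fun a b => Tfun k (s.row / 2 + a) (s.col / 2 + b),
      Set.mem_iUnion.2 ⟨k, s.row / 2, s.col / 2, by omega, by omega, fun a b => rfl⟩,
      fun a b => ?_⟩
    rw [muPatE_eq _ (by omega) (by omega)]
    show Tfun s.level (s.row + a) (s.col + b) = _
    rw [hk, show s.row + a = 2 * (s.row / 2) + (i - 1 + a) by omega,
      show s.col + b = 2 * (s.col / 2) + (j - 1 + b) by omega, Tfun_succ_two_mul_add]

-- Declared only here: earlier, `decide` would use it to enumerate all of `Block`.
instance : Fintype A16 where
  elems := {.A, .B, .C, .D, .E, .F, .G, .H, .I, .J, .K, .L, .M, .N, .O, .P}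
  complete x := by cases x <;> decide

/-- Send a pattern occurring at `t.shift a b` to the pattern at `t.shift a' b'`; this is well
defined and injective once agreement of two anchors `t`, `t'` on the target window forces their
agreement on the source window. -/
theorem card_le_card_of_anchor {p q m n p' q' m' n' : ℕ} (a b a' b' : ℕ) (hm : 2 ≤ m)
    (ha : a ≤ 1) (hb : b ≤ 1) (hp : (p + a + a') % 2 = p') (hq : (q + b + b') % 2 = q')
    (hm' : a' + m' ≤ a + 2 * m) (hn' : b' + n' ≤ b + 2 * n)
    (hinj : ∀ t t' : Site, t.Fits ((p + a) % 2) ((q + b) % 2) (a + 2 * m) (b + 2 * n) →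
      t'.Fits ((p + a) % 2) ((q + b) % 2) (a + 2 * m) (b + 2 * n) →
      t.AgreeOn t' a' b' m' n' → t.AgreeOn t' a b m n) :
    Nat.card (parityPatterns p q m n) ≤ Nat.card (parityPatterns p' q' m' n') := by
  have hanchor : ∀ pat : parityPatterns p q m n, ∃ t : Site,
      t.Fits ((p + a) % 2) ((q + b) % 2) (a + 2 * m) (b + 2 * n) ∧
        (t.shift a b).window m n = pat := by
    rintro ⟨pat, hpat⟩
    obtain ⟨s, ⟨hsp, hsq, hsr, hsc⟩, h1, h2, rfl⟩ := exists_deep_site hm hpat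
    refine ⟨⟨s.level, s.row - a, s.col - b⟩, ⟨?_, ?_, ?_, ?_⟩, ?_⟩
    any_goals (dsimp only; omega)
    simp only [Site.shift, Nat.sub_add_cancel (le_trans ha h1),
      Nat.sub_add_cancel (le_trans hb h2)]
  choose t ht using hanchor
  have hfits : ∀ pat, ((t pat).shift a' b').Fits p' q' m' n' := fun pat => by
    have := (ht pat).1
    simp only [Site.Fits, Site.shift_row, Site.shift_col, Site.shift_level] at this ⊢
    omega
  refine Nat.card_le_card_of_injective
    (fun pat => ⟨((t pat).shift a' b').window m' n', _, hfits pat, rfl⟩)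
    fun x y hxy => Subtype.ext ?_
  rw [← (ht x).2, ← (ht y).2, Site.shift_window_eq_iff]
  exact hinj _ _ (ht x).1 (ht y).1 (Site.shift_window_eq_iff.1 (congrArg Subtype.val hxy))

theorem card_parityPatterns_zero_one_eq_one_one {h : ℕ} (hh : 1 ≤ h) :
    Nat.card (parityPatterns 0 1 (2 * h) (2 * h)) =
      Nat.card (parityPatterns 1 1 (2 * h) (2 * h)) := by
  apply le_antisymm
  · refine card_le_card_of_anchor 0 0 1 0 (by omega) (by norm_num) (by norm_num) rfl rfl
      (by omega) (by omega) fun t t' ht ht' hagree => ?_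
    exact (hagree.extend blockDetermines_one_zero (by norm_num) (by norm_num) hh hh
      (ht.mono (by omega) (by omega)) (ht'.mono (by omega) (by omega))).mono
      le_rfl (by omega) le_rfl (by omega)
  · refine card_le_card_of_anchor 1 0 0 0 (by omega) (by norm_num) (by norm_num) rfl rfl
      (by omega) (by omega) fun t t' ht ht' hagree => ?_
    exact (hagree.extend blockDetermines_zero_zero (by norm_num) (by norm_num) hh hh
      (ht.mono (by omega) (by omega)) (ht'.mono (by omega) (by omega))).mono
      (by omega) (by omega) le_rfl (by omega)

theorem card_parityPatterns_zero_one_eq_one_zero {h : ℕ} (hh : 1 ≤ h) :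
    Nat.card (parityPatterns 0 1 (2 * h) (2 * h)) =
      Nat.card (parityPatterns 1 0 (2 * h) (2 * h)) := by
  apply le_antisymm
  · refine card_le_card_of_anchor 0 0 1 1 (by omega) (by norm_num) (by norm_num) rfl rfl
      (by omega) (by omega) fun t t' ht ht' hagree => ?_
    exact (hagree.extend blockDetermines_one_one (by norm_num) (by norm_num) hh hh
      (ht.mono (by omega) (by omega)) (ht'.mono (by omega) (by omega))).mono
      le_rfl (by omega) le_rfl (by omega)
  · refine card_le_card_of_anchor 1 1 0 0 (by omega) (by norm_num) (by norm_num) rfl rfl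
      (by omega) (by omega) fun t t' ht ht' hagree => ?_
    exact (hagree.extend blockDetermines_zero_zero (by norm_num) (by norm_num) hh hh
      (ht.mono (by omega) (by omega)) (ht'.mono (by omega) (by omega))).mono
      (by omega) (by omega) (by omega) (by omega)

theorem card_parityPatterns_zero_zero_eq_zero_one {h : ℕ} (hh : 1 ≤ h) :
    Nat.card (parityPatterns 0 0 (2 * h + 1) (2 * h + 1)) =
      Nat.card (parityPatterns 0 1 (2 * h + 1) (2 * h + 1 + 1)) := by
  apply le_antisymm
  · exact card_le_card_of_anchor 0 1 0 0 (by omega) (by norm_num) (by norm_num) rfl rfl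
      (by omega) (by omega) fun t t' _ _ hagree => hagree.mono le_rfl le_rfl (by omega) (by omega)
  · refine card_le_card_of_anchor 0 0 0 1 (by omega) (by norm_num) (by norm_num) rfl rfl
      (by omega) (by omega) fun t t' ht ht' hagree => ?_
    have hcol := (hagree.mono (a' := 1) (b' := 1) (m' := 2 * h) (n' := 2 * 1) (by omega)
      (by omega) le_rfl (by omega)).extend blockDetermines_one_one (by norm_num)
      (by norm_num) hh le_rfl (ht.mono (by omega) (by omega)) (ht'.mono (by omega) (by omega))
    intro i j _ hi _ hj
    rcases Nat.eq_zero_or_pos j with rfl | hj0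
    · exact hcol i 0 (by omega) (by omega) le_rfl (by omega)
    · exact hagree i j (by omega) (by omega) hj0 (by omega)

end Supertile

/-- Lemma 5.1: a_{1,2}(2n) = a_{2,1}(2n) = a_{2,2}(2n) and
a_{1,1}(2n+1) = b_{1,2}(2n+1). -/
theorem second_abc_equalities (n : ℕ) (hn : 1 ≤ n) :
    (aT 1 2 (2 * n) = aT 2 1 (2 * n) ∧ aT 1 2 (2 * n) = aT 2 2 (2 * n)) ∧
    aT 1 1 (2 * n + 1) = bT 1 2 (2 * n + 1) := by
  simp only [aT, bT]
  rw [Supertile.Pij_eq_parityPatterns 1 2, Supertile.Pij_eq_parityPatterns 2 1,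
    Supertile.Pij_eq_parityPatterns 2 2, Supertile.Pij_eq_parityPatterns 1 1,
    Supertile.Pij_eq_parityPatterns 1 2]
  · exact ⟨⟨Supertile.card_parityPatterns_zero_one_eq_one_zero hn,
      Supertile.card_parityPatterns_zero_one_eq_one_one hn⟩,
      Supertile.card_parityPatterns_zero_zero_eq_zero_one hn⟩
  all_goals omega
end
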